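/- Let a be a pure quaternion and B a nonzero quaternion. Every quaternion X solving X ⋆ B = a is of the form X = -(τ + a)·B·i / |B|² for some real number τ. -/

import Mathlib

open Quaternion

/-- The imaginary unit quaternion `i`. -/
noncomputable def qi : Quaternion ℝ := ⟨0, 1, 0, 0⟩

/-- The commutative "star" product `A ⋆ B = (1/2)(A i B* + B i A*)`. -/
noncomputable def qstar (A B : Quaternion ℝ) : Quaternion ℝ :=
  ((1 : ℝ) / 2) • (A * qi * star B + B * qi * star A)

/-!
Since `i* = -i`, the second summand `B i X*` of `X ⋆ B` is `-(X i B*)*`, so `X ⋆ B` is the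
imaginary part of `q = X i B*`. Hence `X ⋆ B = a` forces `q = τ + a` with `τ = Re q`, and
multiplying `X i B* = τ + a` on the right by `B i` gives `-|B|² X = (τ + a) B i`, because
`B* B = |B|²` is real and `i² = -1`.
-/

theorem Quaternion.self_sub_star {R : Type*} [CommRing R] (q : ℍ[R]) :
    q - star q = (2 : R) • q.im := by
  ext <;> simp [two_mul]

theorem star_qi : star qi = -qi :=
  star_eq_neg.mpr rfl

theorem qi_mul_qi : qi * qi = -1 := by
  ext <;> (simp; simp [qi])

theorem qstar_eq_im (A B : ℍ[ℝ]) : qstar A B = (A * qi * star B).im := by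
  have hswap : B * qi * star A = -star (A * qi * star B) := by
    simp only [star_mul, star_star, star_qi]
    noncomm_ring
  rw [qstar, hswap, ← sub_eq_add_neg, Quaternion.self_sub_star, smul_smul]
  norm_num

theorem eq_smul_of_mul_qi_mul_star_eq {X B c : ℍ[ℝ]} (hB : B ≠ 0)
    (h : X * qi * star B = c) : X = (‖B‖ ^ 2)⁻¹ • (-c * B * qi) := by
  have hnormSq : star B * B = ((‖B‖ ^ 2 : ℝ) : ℍ[ℝ]) := by
    rw [star_mul_self, normSq_eq_norm_mul_self, sq]
  have hsolve : -c * B * qi = ‖B‖ ^ 2 • X := by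
    calc -c * B * qi = -(X * qi * (star B * B) * qi) := by rw [← h]; noncomm_ring
      _ = ‖B‖ ^ 2 • -(X * (qi * qi)) := by
        rw [hnormSq, mul_coe_eq_smul, smul_mul_assoc, ← smul_neg, mul_assoc]
      _ = ‖B‖ ^ 2 • X := by rw [qi_mul_qi, mul_neg_one, neg_neg]
  rw [hsolve, inv_smul_smul₀ (pow_ne_zero 2 (norm_ne_zero_iff.mpr hB))]

theorem qstar_linear_solution_form_general (a B : Quaternion ℝ) (hB : B ≠ 0)
    (X : Quaternion ℝ) (hX : qstar X B = a) :
    ∃ τ : ℝ, X = (‖B‖ ^ 2)⁻¹ • (-(((τ : ℝ) : Quaternion ℝ) + a) * B * qi) := by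
  refine ⟨(X * qi * star B).re, eq_smul_of_mul_qi_mul_star_eq hB ?_⟩
  rw [← hX, qstar_eq_im, re_add_im]

/-- For pure `a` and nonzero `B`, every solution of `X ⋆ B = a` has the stated form. -/
theorem qstar_linear_solution_form (a B : Quaternion ℝ) (ha : a.re = 0) (hB : B ≠ 0)
    (X : Quaternion ℝ) (hX : qstar X B = a) :
    ∃ τ : ℝ, X = (‖B‖ ^ 2)⁻¹ • (-(((τ : ℝ) : Quaternion ℝ) + a) * B * qi) :=
  qstar_linear_solution_form_general a B hB X hX
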